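/- arXiv:2004.03520 — 2 statements merged into one kernel-verified Lean document; each statement's English description precedes it below -/
import Mathlib

section
/- Let H : ℤⁿ → ℕ satisfy the one-step property, and assume the downward propagation property: for all v ∈ ℤⁿ, all indices i, and all j ≠ i, if H(v + eᵢ) = H(v) then H(v − eⱼ + eᵢ) = H(v − eⱼ). Fix an index i and integers sᵢ, N, and suppose H(v) = 0 whenever vᵢ ≥ sᵢ and vⱼ ≥ N for all j ≠ i. Then H(v + eᵢ) = H(v) for every v ∈ ℤⁿ with vᵢ ≥ sᵢ. Consequently H(v₁,…,vᵢ,…,vₙ) depends only on the coordinates vⱼ with j ≠ i, as long as vᵢ ≥ sᵢ. -/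
/-- The one-step (growth control) property of an H-function on `ℤⁿ`. -/
def OneStep {n : ℕ} (H : (Fin n → ℤ) → ℕ) : Prop :=
  ∀ (s : Fin n → ℤ) (i : Fin n),
    H (s - Pi.single i 1) = H s ∨ H (s - Pi.single i 1) = H s + 1

theorem stmt_11 {n : ℕ} (H : (Fin n → ℤ) → ℕ) (hH : OneStep H)
    (hdown : ∀ (v : Fin n → ℤ) (i j : Fin n), j ≠ i →
      H (v + Pi.single i 1) = H v →
      H (v - Pi.single j 1 + Pi.single i 1) = H (v - Pi.single j 1))
    (i : Fin n) (si N : ℤ)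
    (hzero : ∀ v : Fin n → ℤ, si ≤ v i → (∀ j, j ≠ i → N ≤ v j) → H v = 0) :
    (∀ v : Fin n → ℤ, si ≤ v i → H (v + Pi.single i 1) = H v) ∧
      ∀ v w : Fin n → ℤ, si ≤ v i → si ≤ w i →
        (∀ j, j ≠ i → v j = w j) → H v = H w := by
  -- base case helper: if all off-i coordinates are ≥ N, the equality holds
  have hbase : ∀ v : Fin n → ℤ, si ≤ v i → (∀ j, j ≠ i → N ≤ v j) →
      H (v + Pi.single i 1) = H v := by
    intro v hv hall
    have h1 : H v = 0 := hzero v hv hall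
    have h2 : H (v + Pi.single i 1) = 0 := by
      apply hzero
      · simp only [Pi.add_apply, Pi.single_eq_same]; omega
      · intro j hj
        simp only [Pi.add_apply, Pi.single_apply, if_neg hj, add_zero]
        exact hall j hj
    rw [h1, h2]
  have key : ∀ (m : ℕ) (v : Fin n → ℤ),
      (∑ j, if j = i then 0 else (N - v j).toNat) ≤ m → si ≤ v i →
      H (v + Pi.single i 1) = H v := by
    intro m
    induction m with
    | zero =>
      intro v hm hv
      apply hbase v hv
      intro j hj
      have := Finset.sum_eq_zero_iff.mp (Nat.le_zero.mp hm) j (Finset.mem_univ j)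
      simp only [if_neg hj] at this
      omega
    | succ m ih =>
      intro v hm hv
      by_cases hall : ∀ j, j ≠ i → N ≤ v j
      · exact hbase v hv hall
      · push_neg at hall
        obtain ⟨j, hji, hjN⟩ := hall
        set v' := v + Pi.single j 1 with hv'
        have hsum : (∑ k, if k = i then 0 else (N - v' k).toNat) <
            ∑ k, if k = i then 0 else (N - v k).toNat := by
          apply Finset.sum_lt_sum
          · intro k _
            by_cases hk : k = i
            · simp [hk]
            · simp only [if_neg hk, hv', Pi.add_apply, Pi.single_apply]
              split <;> omega
          · refine ⟨j, Finset.mem_univ j, ?_⟩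
            simp only [if_neg hji, hv', Pi.add_apply, Pi.single_eq_same]
            omega
        have hv'i : si ≤ v' i := by
          simp only [hv', Pi.add_apply, Pi.single_apply, if_neg (Ne.symm hji)]
          omega
        have h1 : H (v' + Pi.single i 1) = H v' := ih v' (by omega) hv'i
        have h2 := hdown v' i j hji h1
        have hvv : v' - Pi.single j 1 = v := by
          simp [hv']
        rw [hvv] at h2
        exact h2
  have part1 : ∀ v : Fin n → ℤ, si ≤ v i → H (v + Pi.single i 1) = H v :=
    fun v hv => key _ v le_rfl hv
  refine ⟨part1, ?_⟩
  -- second part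
  have step : ∀ (k : ℕ) (v : Fin n → ℤ), si ≤ v i →
      H (Function.update v i (v i + k)) = H v := by
    intro k
    induction k with
    | zero => intro v hv; simp
    | succ k ih =>
      intro v hv
      have heq : Function.update v i (v i + (k + 1 : ℕ)) =
          Function.update v i (v i + k) + Pi.single i 1 := by
        funext l
        by_cases hl : l = i
        · subst hl; simp; ring
        · simp [Function.update_apply, Pi.single_apply, hl]
      rw [heq, part1 _ (by simp; omega)]
      exact ih v hv
  have half : ∀ v w : Fin n → ℤ, si ≤ v i → v i ≤ w i →
      (∀ j, j ≠ i → v j = w j) → H v = H w := by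
    intro v w hv hvw hagree
    have hw : w = Function.update v i (v i + (w i - v i).toNat) := by
      funext l
      by_cases hl : l = i
      · subst hl; simp; omega
      · simp [Function.update_apply, hl, ← hagree l hl]
    rw [hw, step _ v hv]
  intro v w hv hw hagree
  rcases le_total (v i) (w i) with h | h
  · exact half v w hv h hagree
  · exact (half w v hw h (fun j hj => (hagree j hj).symm)).symm
end

section
/- Let H : ℤ² → ℕ satisfy the one-step property and suppose its zero set equals the quadrant {v : v ⪰ s} for some s = (s₁, s₂) ∈ ℤ². Suppose further that the local configuration of H at s is 'Case 1 with value 0 at s and 1 on the other three corners', i.e. H(s) = 0, H(s − e₁) = H(s − e₂) = H(s − e₁ − e₂) = 1, and that H stabilizes: H(x₁, x₂) = H(x̄₁, x̄₂) whenever x₁ + x₂ ≥ s₁ + s₂ − 2, where x̄ᵢ = ∞ if xᵢ ≥ sᵢ and x̄ᵢ = xᵢ otherwise (with H(∞, x₂) := lim_{m→∞} H(m, x₂), H(x₁, ∞) := lim_{m→∞} H(x₁, m), both limits existing since H is non-increasing and ℕ-valued, and H(∞,∞) := 0). Then for every (v₁, v₂) with v₁ + v₂ ≥ s₁ + s₂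 and (v₁, v₂) ≠ s, at least one of the four values H(v), H(v − e₁), H(v − e₂), H(v − e₁ − e₂) coincides with the value obtained by replacing v by v − e_i for an index i with vᵢ > sᵢ; concretely: if vᵢ > sᵢ then H(v − e_B − eᵢ) = H(v − e_B) for every B ⊆ {1, 2} \ {i}. -/
/-- The one-step property for a function on `ℤ²`. -/
def OneStep2 (H : ℤ × ℤ → ℕ) : Prop :=
  ∀ v : ℤ × ℤ,
    (H (v - (1, 0)) = H v ∨ H (v - (1, 0)) = H v + 1) ∧
    (H (v - (0, 1)) = H v ∨ H (v - (0, 1)) = H v + 1)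

theorem stmt_14 (H : ℤ × ℤ → ℕ) (hH : OneStep2 H) (s : ℤ × ℤ)
    (hzero : ∀ v : ℤ × ℤ, H v = 0 ↔ (s.1 ≤ v.1 ∧ s.2 ≤ v.2))
    (hcase1 : H s = 0 ∧ H (s - (1, 0)) = 1 ∧ H (s - (0, 1)) = 1 ∧ H (s - (1, 1)) = 1)
    -- the "stable" values `H(∞, x₂)` and `H(x₁, ∞)`, which exist as eventual values
    -- of the non-increasing ℕ-valued sequences `m ↦ H(m, x₂)` and `m ↦ H(x₁, m)`
    (Hi1 Hi2 : ℤ → ℕ)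
    (hHi1 : ∀ x₂ : ℤ, ∃ M : ℤ, ∀ m : ℤ, M ≤ m → H (m, x₂) = Hi1 x₂)
    (hHi2 : ∀ x₁ : ℤ, ∃ M : ℤ, ∀ m : ℤ, M ≤ m → H (x₁, m) = Hi2 x₁)
    -- stabilization: `H(x₁, x₂) = H(x̄₁, x̄₂)` whenever `x₁ + x₂ ≥ s₁ + s₂ - 2`
    (hstab : ∀ x : ℤ × ℤ, s.1 + s.2 - 2 ≤ x.1 + x.2 →
      (s.1 ≤ x.1 → s.2 ≤ x.2 → H x = 0) ∧
      (s.1 ≤ x.1 → x.2 < s.2 → H x = Hi1 x.2) ∧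
      (x.1 < s.1 → s.2 ≤ x.2 → H x = Hi2 x.1)) :
    ∀ v : ℤ × ℤ, s.1 + s.2 ≤ v.1 + v.2 → v ≠ s →
      (s.1 < v.1 → H (v - (1, 0)) = H v ∧ H (v - (1, 1)) = H (v - (0, 1))) ∧
      (s.2 < v.2 → H (v - (0, 1)) = H v ∧ H (v - (1, 1)) = H (v - (1, 0))) := by
  rintro ⟨a, b⟩ hsum hne
  obtain ⟨s1, s2⟩ := s
  simp only [Prod.mk_sub_mk] at *
  norm_num at hsum ⊢
  constructor
  · intro h1
    by_cases h2 : s2 ≤ b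
    · have e0 : H (a, b) = 0 := (hzero (a, b)).2 ⟨by omega, h2⟩
      have e1 : H (a - 1, b) = 0 := (hzero (a - 1, b)).2 ⟨by omega, h2⟩
      by_cases h3 : s2 ≤ b - 1
      · have e2 : H (a, b - 1) = 0 := (hzero (a, b - 1)).2 ⟨by omega, h3⟩
        have e3 : H (a - 1, b - 1) = 0 := (hzero (a - 1, b - 1)).2 ⟨by omega, h3⟩
        exact ⟨by rw [e0, e1], by rw [e2, e3]⟩
      · have e2 : H (a, b - 1) = Hi1 (b - 1) :=
          (hstab (a, b - 1) (by simp; omega)).2.1 (by omega) (by simp; omega)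
        have e3 : H (a - 1, b - 1) = Hi1 (b - 1) :=
          (hstab (a - 1, b - 1) (by simp; omega)).2.1 (by simp; omega) (by simp; omega)
        exact ⟨by rw [e0, e1], by rw [e2, e3]⟩
    · push_neg at h2
      have e0 : H (a, b) = Hi1 b :=
        (hstab (a, b) (by simp; omega)).2.1 (by omega) (by simpa)
      have e1 : H (a - 1, b) = Hi1 b :=
        (hstab (a - 1, b) (by simp; omega)).2.1 (by simp; omega) (by simpa)
      have e2 : H (a, b - 1) = Hi1 (b - 1) :=
        (hstab (a, b - 1) (by simp; omega)).2.1 (by omega) (by simp; omega)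
      have e3 : H (a - 1, b - 1) = Hi1 (b - 1) :=
        (hstab (a - 1, b - 1) (by simp; omega)).2.1 (by simp; omega) (by simp; omega)
      exact ⟨by rw [e0, e1], by rw [e2, e3]⟩
  · intro h1
    by_cases h2 : s1 ≤ a
    · have e0 : H (a, b) = 0 := (hzero (a, b)).2 ⟨h2, by omega⟩
      have e1 : H (a, b - 1) = 0 := (hzero (a, b - 1)).2 ⟨h2, by omega⟩
      by_cases h3 : s1 ≤ a - 1
      · have e2 : H (a - 1, b) = 0 := (hzero (a - 1, b)).2 ⟨h3, by omega⟩
        have e3 : H (a - 1, b - 1) = 0 := (hzero (a - 1, b - 1)).2 ⟨h3, by omega⟩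
        exact ⟨by rw [e0, e1], by rw [e2, e3]⟩
      · have e2 : H (a - 1, b) = Hi2 (a - 1) :=
          (hstab (a - 1, b) (by simp; omega)).2.2 (by simp; omega) (by omega)
        have e3 : H (a - 1, b - 1) = Hi2 (a - 1) :=
          (hstab (a - 1, b - 1) (by simp; omega)).2.2 (by simp; omega) (by simp; omega)
        exact ⟨by rw [e0, e1], by rw [e2, e3]⟩
    · push_neg at h2
      have e0 : H (a, b) = Hi2 a :=
        (hstab (a, b) (by simp; omega)).2.2 (by simpa) (by omega)
      have e1 : H (a, b - 1) = Hi2 a :=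
        (hstab (a, b - 1) (by simp; omega)).2.2 (by simpa) (by simp; omega)
      have e2 : H (a - 1, b) = Hi2 (a - 1) :=
        (hstab (a - 1, b) (by simp; omega)).2.2 (by simp; omega) (by omega)
      have e3 : H (a - 1, b - 1) = Hi2 (a - 1) :=
        (hstab (a - 1, b - 1) (by simp; omega)).2.2 (by simp; omega) (by simp; omega)
      exact ⟨by rw [e0, e1], by rw [e2, e3]⟩
end
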